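/- Let ψ₂(x) = (x−1)/(x+1). For probability densities s, q, q' with respect to μ, ∫ ψ₂(√(q'/q)) s dμ ≤ 4 h²(s,q) − (3/8) h²(s,q'). -/

import Mathlib

open MeasureTheory

/-- The squared Hellinger distance between the probability measures with
densities `a` and `b` with respect to `μ`. -/
noncomputable def H2 {α : Type*} [MeasurableSpace α] (μ : Measure α) (a b : α → ℝ) : ℝ :=
  (1 / 2) * ∫ x, (Real.sqrt (a x) - Real.sqrt (b x)) ^ 2 ∂μ

/-- `ψ₂(√(q'/q))` evaluated with the conventions `0/0 = 1` (giving `ψ₂(1) = 0`)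
and `a/0 = +∞` for `a > 0` (giving `ψ₂(+∞) = 1`), where `ψ₂(x) = (x-1)/(x+1)`. -/
noncomputable def psi2Ratio {α : Type*} (q q' : α → ℝ) (x : α) : ℝ :=
  if q x = 0 then (if q' x = 0 then 0 else 1)
  else (Real.sqrt (q' x / q x) - 1) / (Real.sqrt (q' x / q x) + 1)

/-!
With `t = √s`, `u = √q`, `v = √q'` we have `ψ₂(√(q'/q)) = (v - u) / (u + v)`, and the theorem is
the integral of the pointwise inequality
`(v - u) / (u + v) * t² ≤ 2 (t - u)² - (3/16) (t - v)² + (v² - u²) / 4`,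
because `∫ (q' - q) = 0` and `∫ (√s - √q)² = 2 h²(s, q)`.
-/

lemma sub_div_add_mul_sq_le (t u v : ℝ) (hu : 0 ≤ u) (hv : 0 ≤ v) :
    (v - u) / (u + v) * t ^ 2 ≤
      2 * (t - u) ^ 2 - 3 / 16 * (t - v) ^ 2 + (v ^ 2 - u ^ 2) / 4 := by
  rcases (add_nonneg hu hv).eq_or_lt with huv | huv
  · obtain ⟨rfl, rfl⟩ : u = 0 ∧ v = 0 := ⟨by linarith, by linarith⟩
    nlinarith [sq_nonneg t]
  rw [div_mul_eq_mul_div, div_le_iff₀ huv]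
  -- 16 (rhs - lhs) = u (4/7 (7x + y)² + 59/7 y²) + v ((y - 4x)² + 4x²), x = t - u, y = t - v
  nlinarith [mul_nonneg hu (sq_nonneg (7 * (t - u) + (t - v))), mul_nonneg hu (sq_nonneg (t - v)),
    mul_nonneg hv (sq_nonneg (4 * u - 3 * t - v)), mul_nonneg hv (sq_nonneg (t - u))]

lemma abs_sub_div_add_le_one {u v : ℝ} (hu : 0 ≤ u) (hv : 0 ≤ v) : |(v - u) / (u + v)| ≤ 1 := by
  rw [abs_div, abs_of_nonneg (add_nonneg hu hv)]
  exact div_le_one_of_le₀ (abs_sub_le_iff.mpr ⟨by linarith, by linarith⟩) (add_nonneg hu hv)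

section Densities

variable {α : Type*} {s q q' : α → ℝ}

/-- At `q x = q' x = 0` the right side is the junk value `0 / 0 = 0`, which is the convention
`ψ₂(0/0) = ψ₂(1) = 0`. -/
lemma psi2Ratio_eq_div {x : α} (hq : 0 ≤ q x) (hq' : 0 ≤ q' x) :
    psi2Ratio q q' x = (√(q' x) - √(q x)) / (√(q x) + √(q' x)) := by
  unfold psi2Ratio
  split_ifs with h h'
  · simp [h, h']
  · have : √(q' x) ≠ 0 := Real.sqrt_ne_zero'.mpr (lt_of_le_of_ne hq' (Ne.symm h'))
    simp [h, this]
  · have hu : 0 < √(q x) := Real.sqrt_pos.mpr (lt_of_le_of_ne hq (Ne.symm h))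
    rw [Real.sqrt_div hq', div_sub_one hu.ne', div_add_one hu.ne', div_div_div_cancel_right₀ hu.ne',
      add_comm (√(q' x))]

lemma psi2Ratio_mul_le {x : α} (hs : 0 ≤ s x) (hq : 0 ≤ q x) (hq' : 0 ≤ q' x) :
    psi2Ratio q q' x * s x ≤
      2 * (√(s x) - √(q x)) ^ 2 - 3 / 16 * (√(s x) - √(q' x)) ^ 2 + (q' x - q x) / 4 := by
  have key := sub_div_add_mul_sq_le (√(s x)) _ _ (Real.sqrt_nonneg (q x)) (Real.sqrt_nonneg (q' x))
  rwa [Real.sq_sqrt hs, Real.sq_sqrt hq, Real.sq_sqrt hq', ← psi2Ratio_eq_div hq hq'] at key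

variable [MeasurableSpace α] {μ : Measure α}

lemma integrable_sq_sqrt_sub_sqrt (hs : Integrable s μ) (hq : Integrable q μ)
    (hs0 : ∀ x, 0 ≤ s x) (hq0 : ∀ x, 0 ≤ q x) :
    Integrable (fun x => (√(s x) - √(q x)) ^ 2) μ := by
  refine (hs.add hq).mono'
    ((hs.aemeasurable.sqrt.sub hq.aemeasurable.sqrt).pow_const 2).aestronglyMeasurable
    (Filter.Eventually.of_forall fun x => ?_)
  rw [Real.norm_of_nonneg (sq_nonneg _), Pi.add_apply]
  nlinarith [mul_nonneg (Real.sqrt_nonneg (s x)) (Real.sqrt_nonneg (q x)), Real.sq_sqrt (hs0 x),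
    Real.sq_sqrt (hq0 x)]

lemma integrable_psi2Ratio_mul (hs : Integrable s μ) (hq : Integrable q μ) (hq' : Integrable q' μ)
    (hq0 : ∀ x, 0 ≤ q x) (hq'0 : ∀ x, 0 ≤ q' x) :
    Integrable (fun x => psi2Ratio q q' x * s x) μ := by
  have hψ : psi2Ratio q q' = fun x => (√(q' x) - √(q x)) / (√(q x) + √(q' x)) :=
    funext fun x => psi2Ratio_eq_div (hq0 x) (hq'0 x)
  rw [hψ]
  refine hs.bdd_mul (c := 1) ?_ (Filter.Eventually.of_forall fun x => ?_)
  · have hu := hq.aemeasurable.sqrt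
    have hv := hq'.aemeasurable.sqrt
    exact ((hv.sub hu).div (hu.add hv)).aestronglyMeasurable
  · exact abs_sub_div_add_le_one (Real.sqrt_nonneg _) (Real.sqrt_nonneg _)

end Densities

theorem stmt12_general {α : Type*} [MeasurableSpace α] (μ : Measure α) (s q q' : α → ℝ)
    (hs0 : ∀ x, 0 ≤ s x) (hq0 : ∀ x, 0 ≤ q x) (hq'0 : ∀ x, 0 ≤ q' x)
    (hsint : ∫ x, s x ∂μ = 1) (hqint : ∫ x, q x ∂μ = 1) (hq'int : ∫ x, q' x ∂μ = 1) :
    ∫ x, psi2Ratio q q' x * s x ∂μ ≤ 4 * H2 μ s q - (3 / 8) * H2 μ s q' := by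
  have hs := Integrable.of_integral_ne_zero (hsint ▸ one_ne_zero)
  have hq := Integrable.of_integral_ne_zero (hqint ▸ one_ne_zero)
  have hq' := Integrable.of_integral_ne_zero (hq'int ▸ one_ne_zero)
  have hsq := (integrable_sq_sqrt_sub_sqrt hs hq hs0 hq0).const_mul 2
  have hsq' := (integrable_sq_sqrt_sub_sqrt hs hq' hs0 hq'0).const_mul (3 / 16)
  have hsub : Integrable (fun x => 2 * (√(s x) - √(q x)) ^ 2
      - 3 / 16 * (√(s x) - √(q' x)) ^ 2) μ := hsq.sub hsq'
  have hdiff : Integrable (fun x => (q' x - q x) / 4) μ := (hq'.sub hq).div_const 4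
  calc ∫ x, psi2Ratio q q' x * s x ∂μ
      ≤ ∫ x, (2 * (√(s x) - √(q x)) ^ 2 - 3 / 16 * (√(s x) - √(q' x)) ^ 2
          + (q' x - q x) / 4) ∂μ :=
        integral_mono (integrable_psi2Ratio_mul hs hq hq' hq0 hq'0) (hsub.add hdiff)
          fun x => psi2Ratio_mul_le (hs0 x) (hq0 x) (hq'0 x)
    _ = 4 * H2 μ s q - (3 / 8) * H2 μ s q' := by
        rw [integral_add hsub hdiff, integral_sub hsq hsq', integral_const_mul,
          integral_const_mul, integral_div, integral_sub hq' hq, hqint, hq'int]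
        unfold H2
        ring

theorem stmt12 {α : Type*} [MeasurableSpace α] (μ : Measure α) (s q q' : α → ℝ)
    (hs : Measurable s) (hq : Measurable q) (hq' : Measurable q')
    (hs0 : ∀ x, 0 ≤ s x) (hq0 : ∀ x, 0 ≤ q x) (hq'0 : ∀ x, 0 ≤ q' x)
    (hsint : ∫ x, s x ∂μ = 1) (hqint : ∫ x, q x ∂μ = 1) (hq'int : ∫ x, q' x ∂μ = 1) :
    ∫ x, psi2Ratio q q' x * s x ∂μ ≤ 4 * H2 μ s q - (3 / 8) * H2 μ s q' :=
  stmt12_general μ s q q' hs0 hq0 hq'0 hsint hqint hq'int
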